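/- For a random segmentation L whose volume ∫ L dλ is almost surely equal to a constant c > 0, Dice satisfies D_m(s) = E[D_L(s)] for every deterministic segmentation s with ∫ s dλ + c > 0, where m(ω) = E[L(ω)]. -/
import Mathlib


open MeasureTheory Set

noncomputable section

/-- Normalized Lebesgue measure on the unit cube `[0,1]^n`. -/
def cubeMeasure (n : ℕ) : Measure (Fin n → ℝ) :=
  volume.restrict (Set.univ.pi fun _ => Set.Icc (0:ℝ) 1)

/-- A segmentation: a measurable `{0,1}`-valued function on the cube. -/
def IsSeg {n : ℕ} (s : (Fin n → ℝ) → ℝ) : Prop :=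
  Measurable s ∧ ∀ ω, s ω = 0 ∨ s ω = 1

/-- A marginal function: a measurable `[0,1]`-valued function on the cube. -/
def IsMarg {n : ℕ} (m : (Fin n → ℝ) → ℝ) : Prop :=
  Measurable m ∧ ∀ ω, m ω ∈ Set.Icc (0:ℝ) 1

/-- The volume `‖f‖₁ = ∫ f dλ` (for nonnegative `f`). -/
def vol {n : ℕ} (f : (Fin n → ℝ) → ℝ) : ℝ := ∫ ω, f ω ∂(cubeMeasure n)

/-- `F_m(t) = λ({ω : 1 - m(ω) ≤ t})`. -/
def Fcdf {n : ℕ} (m : (Fin n → ℝ) → ℝ) (t : ℝ) : ℝ :=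
  ((cubeMeasure n) {ω | 1 - m ω ≤ t}).toReal

/-- The left limit `F_m(t-) = λ({ω : 1 - m(ω) < t})`. -/
def FcdfMinus {n : ℕ} (m : (Fin n → ℝ) → ℝ) (t : ℝ) : ℝ :=
  ((cubeMeasure n) {ω | 1 - m ω < t}).toReal

/-- The generalized inverse (quantile function) `F_m⁻¹(v) = inf{t ∈ [0,1] : F_m(t) ≥ v}`. -/
def Finv {n : ℕ} (m : (Fin n → ℝ) → ℝ) (v : ℝ) : ℝ :=
  sInf {t | t ∈ Set.Icc (0:ℝ) 1 ∧ v ≤ Fcdf m t}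

/-- Dice of `s` against a reference `r`. -/
def Dice {n : ℕ} (r s : (Fin n → ℝ) → ℝ) : ℝ :=
  2 * (∫ ω, s ω * r ω ∂(cubeMeasure n)) / (vol s + vol r)

theorem stmt18 {n : ℕ} {α : Type*} [MeasurableSpace α]
    (P : Measure α) [IsProbabilityMeasure P]
    (L : α → (Fin n → ℝ) → ℝ)
    (hL : Measurable (Function.uncurry L))
    (hLseg : ∀ a, IsSeg (L a))
    {c : ℝ} (hc : 0 < c) (hconst : ∀ᵐ a ∂P, vol (L a) = c)
    {s : (Fin n → ℝ) → ℝ} (hs : IsSeg s) (hden : 0 < vol s + c) :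
    Dice (fun ω => ∫ a, L a ω ∂P) s = ∫ a, Dice (L a) s ∂P := by

  haveI hμfin : IsFiniteMeasure (cubeMeasure n) := by
    constructor
    rw [cubeMeasure, Measure.restrict_apply_univ]
    rw [volume_pi_pi]
    simp [Real.volume_Icc]
  have hLb : ∀ a ω, |L a ω| ≤ 1 := by
    intro a ω
    rcases (hLseg a).2 ω with h | h <;> simp [h]
  have hsb : ∀ ω, |s ω| ≤ 1 := by
    intro ω; rcases hs.2 ω with h | h <;> simp [h]
  have hintL : Integrable (Function.uncurry L) (P.prod (cubeMeasure n)) := by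
    refine ⟨hL.aestronglyMeasurable, ?_⟩
    apply HasFiniteIntegral.of_bounded (C := 1)
    filter_upwards with p
    simpa [Function.uncurry, Real.norm_eq_abs] using hLb p.1 p.2
  have hintSL : Integrable (Function.uncurry fun a ω => s ω * L a ω)
      (P.prod (cubeMeasure n)) := by
    refine ⟨((hs.1.comp measurable_snd).mul hL).aestronglyMeasurable, ?_⟩
    apply HasFiniteIntegral.of_bounded (C := 1)
    filter_upwards with p
    have := mul_le_one₀ (hsb p.2) (abs_nonneg _) (hLb p.1 p.2)
    simpa [Function.uncurry, Real.norm_eq_abs, abs_mul] using this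
  have hvolm : vol (fun ω => ∫ a, L a ω ∂P) = c := by
    have hswap := integral_integral_swap (f := fun a ω => L a ω) hintL
    have : vol (fun ω => ∫ a, L a ω ∂P) = ∫ a, vol (L a) ∂P := by
      simpa [vol] using hswap.symm
    rw [this, integral_congr_ae hconst]
    simp
  have hnum : (∫ ω, s ω * (∫ a, L a ω ∂P) ∂(cubeMeasure n))
      = ∫ a, ∫ ω, s ω * L a ω ∂(cubeMeasure n) ∂P := by
    have hswap := integral_integral_swap (f := fun a ω => s ω * L a ω) hintSL
    beta_reduce at hswap
    calc ∫ ω, s ω * ∫ a, L a ω ∂P ∂(cubeMeasure n)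
        = ∫ ω, ∫ a, s ω * L a ω ∂P ∂(cubeMeasure n) := by
          refine integral_congr_ae ?_
          filter_upwards with ω
          rw [integral_const_mul]
      _ = ∫ a, ∫ ω, s ω * L a ω ∂(cubeMeasure n) ∂P := hswap.symm
  have hrhs : ∫ a, Dice (L a) s ∂P
      = (2 / (vol s + c)) * ∫ a, ∫ ω, s ω * L a ω ∂(cubeMeasure n) ∂P := by
    rw [← integral_const_mul]
    refine integral_congr_ae ?_
    filter_upwards [hconst] with a ha
    rw [Dice, ha]
    ring
  rw [hrhs, Dice, hvolm, hnum]
  ring
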